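/- arXiv:1501.02606 — 4 statements merged into one kernel-verified Lean document; each statement's English description precedes it below -/
import Mathlib

section
/- Let x = (x_n)_{n≥2} be a sequence with x_n ∈ {1,…,n}, let C ≥ 0, and let A ⊆ M_x be a C-net in (M_x, d_x). If n ≥ 2 satisfies e^{n²} ≥ C, then A ∩ M_{x,n} ≠ ∅. -/
noncomputable section

/-- The tree distance on `ℝ²`. -/
def treeDist (p q : ℝ × ℝ) : ℝ :=
  if p.1 = q.1 then |p.2 - q.2| else |p.2| + |p.1 - q.1| + |q.2|

/-- `∑_{i=2}^n e^{i²}`. -/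
def expSum (n : ℕ) : ℝ := ∑ i ∈ Finset.Icc 2 n, Real.exp ((i : ℝ) ^ 2)

/-- `P⁺_{x,n} = (∑_{i=2}^n e^{i²}, e^{x_n})`. -/
def Pp (x : ℕ → ℕ) (n : ℕ) : ℝ × ℝ := (expSum n, Real.exp (x n))

/-- `P⁻_{x,n} = (∑_{i=2}^n e^{i²}, −e^{x_n})`. -/
def Pm (x : ℕ → ℕ) (n : ℕ) : ℝ × ℝ := (expSum n, -Real.exp (x n))

/-- `M_{x,n} = {P⁺_{x,n}, P⁻_{x,n}}`. -/
def Mpart (x : ℕ → ℕ) (n : ℕ) : Set (ℝ × ℝ) := {Pp x n, Pm x n}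

/-- `M_x = ⋃_{n≥2} M_{x,n}`. -/
def Mset (x : ℕ → ℕ) : Set (ℝ × ℝ) := ⋃ n ∈ {m : ℕ | 2 ≤ m}, Mpart x n

/-- `x = (x_n)_{n≥2}` is a sequence with `x_n ∈ {1,…,n}`. -/
def SeqOK (x : ℕ → ℕ) : Prop := ∀ n, 2 ≤ n → 1 ≤ x n ∧ x n ≤ n

/-- `A` is a `C`-net in `(M_x, d_x)`: `A ⊆ M_x` and every point of `M_x` is at
distance (infimum) at most `C` from `A`. -/
def IsNet (x : ℕ → ℕ) (C : ℝ) (A : Set (ℝ × ℝ)) : Prop :=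
  A ⊆ Mset x ∧ ∀ p ∈ Mset x, ∀ ε > 0, ∃ a ∈ A, treeDist p a ≤ C + ε

/-- `φ : A → B` is a `λ`-bi-Lipschitz bijection. -/
def IsBiLipOn (lam : ℝ) (A B : Set (ℝ × ℝ)) (φ : ℝ × ℝ → ℝ × ℝ) : Prop :=
  Set.BijOn φ A B ∧ ∀ p ∈ A, ∀ q ∈ A,
    lam⁻¹ * treeDist p q ≤ treeDist (φ p) (φ q) ∧
    treeDist (φ p) (φ q) ≤ lam * treeDist p q

lemma expSum_Ioc (n : ℕ) : expSum n = ∑ i ∈ Finset.Ioc 1 n, Real.exp ((i : ℝ) ^ 2) := by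
  rw [expSum]
  exact Finset.sum_congr (by rw [show (2:ℕ) = 1 + 1 from rfl, Finset.Icc_add_one_left_eq_Ioc])
    (fun _ _ => rfl)

lemma expSum_gap {m n : ℕ} (hm : 1 ≤ m) (hmn : m < n) :
    Real.exp ((n : ℝ) ^ 2) ≤ expSum n - expSum m := by
  have hsum : expSum m + ∑ i ∈ Finset.Ioc m n, Real.exp ((i : ℝ) ^ 2) = expSum n := by
    rw [expSum_Ioc, expSum_Ioc]
    exact Finset.sum_Ioc_consecutive (fun i => Real.exp ((i : ℝ) ^ 2)) hm hmn.le
  have hsingle : Real.exp ((n : ℝ) ^ 2) ≤ ∑ i ∈ Finset.Ioc m n, Real.exp ((i : ℝ) ^ 2) :=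
    Finset.single_le_sum (f := fun i : ℕ => Real.exp ((i : ℝ) ^ 2)) (fun i _ => (Real.exp_pos _).le)
      (by simp [Finset.mem_Ioc, hmn])
  linarith

lemma expSum_gap' {m n : ℕ} (hm : 2 ≤ m) (hn : 2 ≤ n) (hne : m ≠ n) :
    Real.exp ((n : ℝ) ^ 2) ≤ |expSum n - expSum m| := by
  rcases lt_or_gt_of_ne hne with hlt | hgt
  · have := expSum_gap (by omega : 1 ≤ m) hlt
    rw [abs_of_nonneg (by linarith [Real.exp_pos ((n:ℝ)^2)])]
    linarith
  · have h1 := expSum_gap (by omega : 1 ≤ n) hgt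
    have h2 : Real.exp ((n : ℝ) ^ 2) ≤ Real.exp ((m : ℝ) ^ 2) := by
      apply Real.exp_le_exp.2
      have : (n : ℝ) ≤ m := by exact_mod_cast hgt.le
      nlinarith [Nat.cast_nonneg (α := ℝ) n]
    rw [abs_sub_comm, abs_of_nonneg (by linarith [Real.exp_pos ((m:ℝ)^2)])]
    linarith

lemma one_le_exp_x (x : ℕ → ℕ) (hx : SeqOK x) {m : ℕ} (hm : 2 ≤ m) :
    1 ≤ Real.exp (x m) := by
  rw [Real.one_le_exp_iff]
  have h1 := (hx m hm).1
  positivity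

/-- If `A ⊆ M_x` is a `C`-net and `e^{n²} ≥ C` (with `n ≥ 2`), then `A ∩ M_{x,n} ≠ ∅`. -/
theorem net_meets_Mpart (x : ℕ → ℕ) (hx : SeqOK x) (C : ℝ) (hC : 0 ≤ C)
    (A : Set (ℝ × ℝ)) (hA : IsNet x C A) (n : ℕ) (hn : 2 ≤ n)
    (h : C ≤ Real.exp ((n : ℝ) ^ 2)) :
    (A ∩ Mpart x n).Nonempty := by
  obtain ⟨hAsub, hnet⟩ := hA
  have hpM : Pp x n ∈ Mset x := by
    refine Set.mem_biUnion (show n ∈ {m : ℕ | 2 ≤ m} from hn) ?_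
    exact Or.inl rfl
  obtain ⟨a, haA, hdist⟩ := hnet (Pp x n) hpM 1 one_pos
  refine ⟨a, haA, ?_⟩
  obtain ⟨_, ⟨m, rfl⟩, hm2⟩ := hAsub haA
  obtain ⟨hm, ham⟩ : 2 ≤ m ∧ a ∈ Mpart x m := by
    simpa using hm2
  rcases eq_or_ne m n with rfl | hne
  · exact ham
  · exfalso
    have ha1 : a.1 = expSum m := by
      rcases ham with rfl | rfl <;> rfl
    have ha2 : |a.2| = Real.exp (x m) := by
      rcases ham with rfl | rfl <;>
        simp [Pp, Pm, abs_of_nonneg (Real.exp_pos _).le]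
    have hne1 : (Pp x n).1 ≠ a.1 := by
      rw [ha1]
      show expSum n ≠ expSum m
      intro heq
      have := expSum_gap' hm hn hne
      rw [heq, sub_self, abs_zero] at this
      linarith [Real.exp_pos ((n : ℝ) ^ 2)]
    have hform : treeDist (Pp x n) a = |(Pp x n).2| + |(Pp x n).1 - a.1| + |a.2| := by
      rw [treeDist, if_neg hne1]
    have hgap := expSum_gap' hm hn hne
    have h1 : (1 : ℝ) ≤ |(Pp x n).2| := by
      rw [show (Pp x n).2 = Real.exp (x n) from rfl,
        abs_of_nonneg (Real.exp_pos _).le]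
      exact one_le_exp_x x hx hn
    have h2 : (1 : ℝ) ≤ |a.2| := by
      rw [ha2]; exact one_le_exp_x x hx hm
    have h3 : Real.exp ((n : ℝ) ^ 2) ≤ |(Pp x n).1 - a.1| := by
      rw [ha1]; exact hgap
    rw [hform] at hdist
    linarith
end
end

section
/- Let x = (x_n)_{n≥2} and y = (y_n)_{n≥2} be sequences with x_n, y_n ∈ {1,…,n}, and suppose there is C ≥ 0 with |x_n − y_n| ≤ C for all n ≥ 2. Then the bijection φ : M_x → M_y determined by φ(P⁺_{x,n}) = P⁺_{y,n} and φ(P⁻_{x,n}) = P⁻_{y,n} for all n ≥ 2 is an e^C-bi-Lipschitz bijection with φ(P⁺_{x,2}) = P⁺_{y,2}. -/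
/-!
On the fibre `{expSum n} × ℝ` the map `φ` multiplies the second coordinate by
`e^{y_n - x_n} ∈ [e^{-C}, e^C]`, and distinct `n` give distinct fibres since `expSum` is strictly
increasing. The tree distance is a sum of absolute values of second coordinates (or of their
difference, within a fibre) and of the unchanged `|u - u'|`, so a fibrewise rescaling by factors
in `[e^{-C}, e^C]` distorts it by a factor in `[e^{-C}, e^C]`.
-/

noncomputable section

open Real

lemma treeDist_scale_le {L : ℝ} (hL : 1 ≤ L) (r : ℝ → ℝ) {a b : ℝ} (hra : r a ∈ Set.Icc 0 L)
    (hrb : r b ∈ Set.Icc 0 L) (s t : ℝ) :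
    treeDist (a, r a * s) (b, r b * t) ≤ L * treeDist (a, s) (b, t) := by
  unfold treeDist
  split_ifs with hab
  · subst hab
    rw [← mul_sub, abs_mul, abs_of_nonneg hra.1]
    gcongr
    exact hra.2
  · rw [abs_mul, abs_mul, abs_of_nonneg hra.1, abs_of_nonneg hrb.1]
    calc r a * |s| + |a - b| + r b * |t| ≤ L * |s| + L * |a - b| + L * |t| := by
          gcongr
          exacts [hra.2, le_mul_of_one_le_left (abs_nonneg _) hL, hrb.2]
      _ = L * (|s| + |a - b| + |t|) := by ring

lemma inv_mul_treeDist_le_scale {L : ℝ} (hL : 1 ≤ L) (r : ℝ → ℝ) {a b : ℝ}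
    (hra : r a ∈ Set.Icc L⁻¹ L) (hrb : r b ∈ Set.Icc L⁻¹ L) (s t : ℝ) :
    L⁻¹ * treeDist (a, s) (b, t) ≤ treeDist (a, r a * s) (b, r b * t) := by
  have hL₀ : 0 < L := zero_lt_one.trans_le hL
  have hr₀ : ∀ u, r u ∈ Set.Icc L⁻¹ L → 0 < r u := fun u hu => (inv_pos.2 hL₀).trans_le hu.1
  have hinv : ∀ u, r u ∈ Set.Icc L⁻¹ L → (r u)⁻¹ ∈ Set.Icc 0 L :=
    fun u hu => ⟨inv_nonneg.2 (hr₀ u hu).le, inv_le_of_inv_le₀ hL₀ hu.1⟩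
  have h := treeDist_scale_le hL (fun u => (r u)⁻¹) (hinv a hra) (hinv b hrb) (r a * s) (r b * t)
  rw [inv_mul_cancel_left₀ (hr₀ a hra).ne', inv_mul_cancel_left₀ (hr₀ b hrb).ne'] at h
  rwa [inv_mul_le_iff₀ hL₀]

lemma isBiLipOn_of_fibrewise_scale {L : ℝ} (hL : 1 ≤ L) {A B : Set (ℝ × ℝ)}
    {φ : ℝ × ℝ → ℝ × ℝ} (r : ℝ → ℝ) (hr : ∀ p ∈ A, r p.1 ∈ Set.Icc L⁻¹ L)
    (hφ : ∀ p ∈ A, φ p = (p.1, r p.1 * p.2)) (himage : φ '' A = B) : IsBiLipOn L A B φ := by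
  have hr₀ : ∀ p ∈ A, 0 < r p.1 :=
    fun p hp => (inv_pos.2 (zero_lt_one.trans_le hL)).trans_le (hr p hp).1
  refine ⟨himage ▸ Set.InjOn.bijOn_image fun p hp q hq hpq => ?_, fun p hp q hq => ?_⟩
  · rw [hφ p hp, hφ q hq, Prod.mk.injEq] at hpq
    obtain ⟨h₁, h₂⟩ := hpq
    rw [h₁] at h₂
    exact Prod.ext h₁ (mul_left_cancel₀ (hr₀ q hq).ne' h₂)
  · rw [hφ p hp, hφ q hq]
    exact ⟨inv_mul_treeDist_le_scale hL r (hr p hp) (hr q hq) p.2 q.2,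
      treeDist_scale_le hL r ⟨(hr₀ p hp).le, (hr p hp).2⟩ ⟨(hr₀ q hq).le, (hr q hq).2⟩ p.2 q.2⟩

lemma exp_sub_mem_Icc_of_abs_sub_le {a b C : ℝ} (h : |a - b| ≤ C) :
    exp (b - a) ∈ Set.Icc (exp C)⁻¹ (exp C) := by
  rw [← exp_neg, Set.mem_Icc, exp_le_exp, exp_le_exp]
  constructor <;> linarith [abs_le.1 h]

lemma expSum_lt_expSum {m n : ℕ} (hn : 2 ≤ n) (hmn : m < n) : expSum m < expSum n :=
  Finset.sum_lt_sum_of_subset (Finset.Icc_subset_Icc_right hmn.le) (i := n)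
    (Finset.mem_Icc.2 ⟨hn, le_rfl⟩) (by simp [Finset.mem_Icc, hmn])
    (exp_pos _) (fun _ _ _ => (exp_pos _).le)

lemma expSum_injOn : Set.InjOn expSum {n | 2 ≤ n} := by
  intro m hm n hn h
  by_contra hne
  rcases Nat.lt_or_gt_of_ne hne with hmn | hnm
  · exact (expSum_lt_expSum hn hmn).ne h
  · exact (expSum_lt_expSum hm hnm).ne' h

section

variable {x y : ℕ → ℕ} {φ : ℝ × ℝ → ℝ × ℝ}

lemma image_Mset (hφ : ∀ n, 2 ≤ n → φ (Pp x n) = Pp y n ∧ φ (Pm x n) = Pm y n) :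
    φ '' Mset x = Mset y := by
  simp only [Mset, Set.image_iUnion₂]
  refine Set.iUnion₂_congr fun n hn => ?_
  rw [Mpart, Set.image_pair, (hφ n hn).1, (hφ n hn).2, Mpart]

lemma exists_map_eq_scale (hφ : ∀ n, 2 ≤ n → φ (Pp x n) = Pp y n ∧ φ (Pm x n) = Pm y n)
    {p : ℝ × ℝ} (hp : p ∈ Mset x) :
    ∃ n, 2 ≤ n ∧ p.1 = expSum n ∧ φ p = (p.1, exp ((y n : ℝ) - x n) * p.2) := by
  simp only [Mset, Mpart, Set.mem_iUnion, Set.mem_insert_iff, Set.mem_singleton_iff] at hp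
  obtain ⟨n, hn, rfl | rfl⟩ := hp
  · refine ⟨n, hn, rfl, ?_⟩
    rw [(hφ n hn).1]
    simp only [Pp, ← exp_add, sub_add_cancel]
  · refine ⟨n, hn, rfl, ?_⟩
    rw [(hφ n hn).2]
    simp only [Pm, mul_neg, ← exp_add, sub_add_cancel]

end

theorem biLip_of_bounded_diff_general (x y : ℕ → ℕ)
    (C : ℝ) (hC : 0 ≤ C) (hdiff : ∀ n, 2 ≤ n → |(x n : ℝ) - (y n : ℝ)| ≤ C)
    (φ : ℝ × ℝ → ℝ × ℝ)
    (hφ : ∀ n, 2 ≤ n → φ (Pp x n) = Pp y n ∧ φ (Pm x n) = Pm y n) :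
    IsBiLipOn (Real.exp C) (Mset x) (Mset y) φ ∧ φ (Pp x 2) = Pp y 2 := by
  let r : ℝ → ℝ := fun u =>
    let n := Function.invFunOn expSum {n | 2 ≤ n} u
    exp ((y n : ℝ) - x n)
  have hr : ∀ n, 2 ≤ n → r (expSum n) = exp ((y n : ℝ) - x n) := fun n hn => by
    simp only [r, expSum_injOn.leftInvOn_invFunOn hn]
  refine ⟨isBiLipOn_of_fibrewise_scale (one_le_exp hC) r (fun p hp => ?_) (fun p hp => ?_)
    (image_Mset hφ), (hφ 2 le_rfl).1⟩
  · obtain ⟨n, hn, hpn, -⟩ := exists_map_eq_scale hφ hp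
    rw [hpn, hr n hn]
    exact exp_sub_mem_Icc_of_abs_sub_le (hdiff n hn)
  · obtain ⟨n, hn, hpn, hφp⟩ := exists_map_eq_scale hφ hp
    rw [hφp, hpn, hr n hn]

/-- If `|x_n − y_n| ≤ C` for all `n ≥ 2`, then the bijection `φ : M_x → M_y`
determined by `φ(P±_{x,n}) = P±_{y,n}` is an `e^C`-bi-Lipschitz bijection
sending `P⁺_{x,2}` to `P⁺_{y,2}`. -/
theorem biLip_of_bounded_diff (x y : ℕ → ℕ) (hx : SeqOK x) (hy : SeqOK y)
    (C : ℝ) (hC : 0 ≤ C) (hdiff : ∀ n, 2 ≤ n → |(x n : ℝ) - (y n : ℝ)| ≤ C)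
    (φ : ℝ × ℝ → ℝ × ℝ)
    (hφ : ∀ n, 2 ≤ n → φ (Pp x n) = Pp y n ∧ φ (Pm x n) = Pm y n) :
    IsBiLipOn (Real.exp C) (Mset x) (Mset y) φ ∧ φ (Pp x 2) = Pp y 2 :=
  biLip_of_bounded_diff_general x y C hC hdiff φ hφ
end
end

section
/- Let x = (x_n)_{n≥2} and y = (y_n)_{n≥2} be sequences with x_n, y_n ∈ {1,…,n}, let C ≥ 0, λ ≥ 1, let A ⊆ M_x be a C-net with P⁺_{x,2} ∈ A, let B ⊆ M_y be a C-net with P⁺_{y,2} ∈ B, and let φ : A → B be a λ-bi-Lipschitz bijection with φ(P⁺_{x,2}) = P⁺_{y,2}. Then there exists N ≥ 2 such that φ(M_{x,n} ∩ A) = M_{y,n} ∩ B for all n ≥ N. -/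
noncomputable section

/-!
Since the base points correspond, `φ` changes the distance to the base point by at most the
factor `λ`. A point of level `m` lies at distance between `expSum m - expSum 2` and
`e² + expSum m + eᵐ` from the base point, and because `e^{(k+1)²}` dwarfs `k e^{k²}`, these
ranges for distinct levels are more than a factor `λ` apart once one of the levels exceeds
`⌈λ⌉ + 2`. So from there on `φ` maps each level of `A` onto the same level of `B`.
-/

lemma expSum_mono {m n : ℕ} (h : m ≤ n) : expSum m ≤ expSum n :=
  Finset.sum_le_sum_of_subset_of_nonneg (Finset.Icc_subset_Icc le_rfl h)
    fun _ _ _ => (Real.exp_pos _).le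

lemma expSum_add_exp_sq_le {m n : ℕ} (hn : 2 ≤ n) (h : m < n) :
    expSum m + Real.exp ((n : ℝ) ^ 2) ≤ expSum n := by
  obtain ⟨k, rfl⟩ : ∃ k, n = k + 1 := ⟨n - 1, by omega⟩
  have hsucc : expSum (k + 1) = expSum k + Real.exp (((k + 1 : ℕ) : ℝ) ^ 2) :=
    Finset.sum_Icc_succ_top (by omega) _
  linarith [expSum_mono (Nat.lt_succ_iff.mp h)]

lemma expSum_le_mul_exp_sq (n : ℕ) : expSum n ≤ n * Real.exp ((n : ℝ) ^ 2) := by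
  calc expSum n ≤ (Finset.Icc 2 n).card • Real.exp ((n : ℝ) ^ 2) := by
        refine Finset.sum_le_card_nsmul _ _ _ fun i hi => Real.exp_le_exp.mpr ?_
        have hin : (i : ℝ) ≤ n := Nat.cast_le.mpr (Finset.mem_Icc.mp hi).2
        gcongr
    _ ≤ n * Real.exp ((n : ℝ) ^ 2) := by
        rw [nsmul_eq_mul, Nat.card_Icc]
        gcongr
        omega

/-- Below level `k + 1` everything is `O(k e^{k²})`, while level `k + 1` adds `e^{(k+1)²}`. -/
lemma lam_mul_lt_expSum_sub {lam : ℝ} (hlam : 0 ≤ lam) {m n : ℕ} (hmn : m < n)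
    (hn : ⌈lam⌉₊ + 3 ≤ n) :
    lam * (Real.exp 2 + expSum m + Real.exp m) < expSum n - expSum 2 := by
  obtain ⟨k, rfl⟩ : ∃ k, n = k + 1 := ⟨n - 1, by omega⟩
  have hk : (2 : ℝ) ≤ k := by exact_mod_cast (show 2 ≤ k by omega)
  have hmk : (m : ℝ) ≤ k := by exact_mod_cast (show m ≤ k by omega)
  set E := Real.exp ((k : ℝ) ^ 2)
  have hbelow : Real.exp 2 + expSum m + Real.exp m ≤ (k + 2) * E := by
    have h2 : Real.exp 2 ≤ E := Real.exp_le_exp.mpr (by nlinarith)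
    have hm : Real.exp m ≤ E := Real.exp_le_exp.mpr (by nlinarith)
    linarith [expSum_mono (show m ≤ k by omega), expSum_le_mul_exp_sq k]
  have hlam_lt : lam < Real.exp k := by
    have : (⌈lam⌉₊ : ℝ) + 2 ≤ k := by exact_mod_cast (show ⌈lam⌉₊ + 2 ≤ k by omega)
    linarith [Nat.le_ceil lam, Real.add_one_le_exp (k : ℝ)]
  have hk_le : (k : ℝ) + 2 ≤ Real.exp (k + 1) := by
    linarith [Real.add_one_le_exp ((k : ℝ) + 1)]
  have hgap : Real.exp (((k : ℝ) + 1) ^ 2) ≤ expSum (k + 1) - expSum 2 := by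
    have := expSum_add_exp_sq_le (m := 2) (n := k + 1) (by omega) (by omega)
    push_cast at this
    linarith
  calc lam * (Real.exp 2 + expSum m + Real.exp m)
      ≤ lam * ((k + 2) * E) := by gcongr
    _ < Real.exp k * Real.exp (k + 1) * E := by
        rw [← mul_assoc]
        refine mul_lt_mul_of_pos_right ?_ (Real.exp_pos _)
        calc lam * (k + 2) ≤ lam * Real.exp (k + 1) := by gcongr
          _ < Real.exp k * Real.exp (k + 1) := by gcongr
    _ = Real.exp (((k : ℝ) + 1) ^ 2) := by
        simp only [E, ← Real.exp_add]
        ring_nf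
    _ ≤ expSum (k + 1) - expSum 2 := hgap

lemma abs_fst_sub_le_treeDist (p q : ℝ × ℝ) : |p.1 - q.1| ≤ treeDist p q := by
  unfold treeDist
  split_ifs with h
  · simp [h]
  · linarith [abs_nonneg p.2, abs_nonneg q.2]

lemma treeDist_le (p q : ℝ × ℝ) : treeDist p q ≤ |p.2| + |p.1 - q.1| + |q.2| := by
  unfold treeDist
  split_ifs
  · linarith [abs_sub p.2 q.2, abs_nonneg (p.1 - q.1)]
  · rfl

lemma fst_of_mem_Mpart {x : ℕ → ℕ} {m : ℕ} {p : ℝ × ℝ} (hp : p ∈ Mpart x m) :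
    p.1 = expSum m := by
  rcases hp with rfl | rfl <;> rfl

lemma abs_snd_of_mem_Mpart {x : ℕ → ℕ} {m : ℕ} {p : ℝ × ℝ} (hp : p ∈ Mpart x m) :
    |p.2| = Real.exp (x m) := by
  rcases hp with rfl | rfl <;> simp [Pp, Pm]

lemma mem_Mset_iff {x : ℕ → ℕ} {p : ℝ × ℝ} :
    p ∈ Mset x ↔ ∃ m, 2 ≤ m ∧ p ∈ Mpart x m := by
  simp [Mset]

section Levels

variable {x y : ℕ → ℕ} {m k : ℕ} {p q : ℝ × ℝ}

lemma sub_expSum_two_le_treeDist (hp : p ∈ Mpart x m) :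
    expSum m - expSum 2 ≤ treeDist (Pp x 2) p := by
  have := abs_fst_sub_le_treeDist (Pp x 2) p
  rw [fst_of_mem_Mpart hp, abs_sub_comm] at this
  exact (le_abs_self _).trans this

lemma treeDist_le_of_mem_Mpart (hx : SeqOK x) (hm : 2 ≤ m) (hp : p ∈ Mpart x m) :
    treeDist (Pp x 2) p ≤ Real.exp 2 + expSum m + Real.exp m := by
  have hx2 : Real.exp (x 2) ≤ Real.exp 2 :=
    Real.exp_le_exp.mpr (by exact_mod_cast (hx 2 le_rfl).2)
  have hxm : Real.exp (x m) ≤ Real.exp m :=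
    Real.exp_le_exp.mpr (by exact_mod_cast (hx m hm).2)
  have hfst : |(Pp x 2).1 - p.1| ≤ expSum m := by
    have h2 : 0 ≤ expSum 2 := Finset.sum_nonneg fun _ _ => (Real.exp_pos _).le
    rw [show (Pp x 2).1 = expSum 2 from rfl, fst_of_mem_Mpart hp, abs_sub_comm,
      abs_of_nonneg (sub_nonneg.mpr (expSum_mono hm))]
    linarith
  have hPp : |(Pp x 2).2| = Real.exp (x 2) := abs_snd_of_mem_Mpart (Or.inl rfl)
  linarith [treeDist_le (Pp x 2) p, abs_snd_of_mem_Mpart hp]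

lemma le_of_treeDist_Pp_two_le {lam : ℝ} (hx : SeqOK x) (hlam : 0 ≤ lam) (hm : 2 ≤ m)
    (hp : p ∈ Mpart x m) (hq : q ∈ Mpart y k)
    (hdist : treeDist (Pp y 2) q ≤ lam * treeDist (Pp x 2) p) (hk : ⌈lam⌉₊ + 3 ≤ k) :
    k ≤ m := by
  by_contra! hmk
  have := lam_mul_lt_expSum_sub hlam hmk hk
  have := mul_le_mul_of_nonneg_left (treeDist_le_of_mem_Mpart hx hm hp) hlam
  linarith [sub_expSum_two_le_treeDist hq]

lemma level_eq_of_treeDist_Pp_two_le {lam : ℝ} (hx : SeqOK x) (hy : SeqOK y)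
    (hlam : 0 ≤ lam) (hm : 2 ≤ m) (hk : 2 ≤ k) (hp : p ∈ Mpart x m) (hq : q ∈ Mpart y k)
    (hup : treeDist (Pp y 2) q ≤ lam * treeDist (Pp x 2) p)
    (hdown : treeDist (Pp x 2) p ≤ lam * treeDist (Pp y 2) q)
    (hN : ⌈lam⌉₊ + 3 ≤ max m k) : m = k := by
  rcases le_max_iff.mp hN with hNm | hNk
  · have hmk := le_of_treeDist_Pp_two_le hy hlam hk hq hp hdown hNm
    have := le_of_treeDist_Pp_two_le hx hlam hm hp hq hup (hNm.trans hmk)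
    omega
  · have hkm := le_of_treeDist_Pp_two_le hx hlam hm hp hq hup hNk
    have := le_of_treeDist_Pp_two_le hy hlam hk hq hp hdown (hNk.trans hkm)
    omega

end Levels

lemma Set.BijOn.image_inter_eq {α β : Type*} {f : α → β} {A S : Set α} {B T : Set β}
    (hf : Set.BijOn f A B) (hST : ∀ a ∈ A, a ∈ S ↔ f a ∈ T) : f '' (S ∩ A) = T ∩ B := by
  ext b
  constructor
  · rintro ⟨a, ⟨haS, haA⟩, rfl⟩
    exact ⟨(hST a haA).mp haS, hf.mapsTo haA⟩
  · rintro ⟨hbT, hbB⟩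
    obtain ⟨a, haA, rfl⟩ := hf.surjOn hbB
    exact ⟨a, ⟨(hST a haA).mpr hbT, haA⟩, rfl⟩

theorem biLip_eventually_matches_general (x y : ℕ → ℕ) (hx : SeqOK x) (hy : SeqOK y)
    (C lam : ℝ) (hlam : 1 ≤ lam)
    (A B : Set (ℝ × ℝ)) (hA : IsNet x C A) (hxA : Pp x 2 ∈ A)
    (hB : IsNet y C B)
    (φ : ℝ × ℝ → ℝ × ℝ) (hφ : IsBiLipOn lam A B φ) (hφ2 : φ (Pp x 2) = Pp y 2) :
    ∃ N, 2 ≤ N ∧ ∀ n, N ≤ n → φ '' (Mpart x n ∩ A) = Mpart y n ∩ B := by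
  obtain ⟨hbij, hlip⟩ := hφ
  have hlam0 : 0 < lam := one_pos.trans_le hlam
  have hlevel : ∀ a ∈ A, ∀ m k, 2 ≤ m → 2 ≤ k → a ∈ Mpart x m → φ a ∈ Mpart y k →
      ⌈lam⌉₊ + 3 ≤ max m k → m = k := by
    intro a ha m k hm hk ham hak hN
    obtain ⟨hdown, hup⟩ := hφ2 ▸ hlip _ hxA a ha
    exact level_eq_of_treeDist_Pp_two_le hx hy hlam0.le hm hk ham hak hup
      ((inv_mul_le_iff₀ hlam0).mp hdown) hN
  refine ⟨⌈lam⌉₊ + 3, by omega, fun n hn => hbij.image_inter_eq fun a ha =>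
    ⟨fun han => ?_, fun hφan => ?_⟩⟩
  · obtain ⟨k, hk, hak⟩ := mem_Mset_iff.mp (hB.1 (hbij.mapsTo ha))
    rwa [hlevel a ha n k (by omega) hk han hak (le_max_of_le_left hn)]
  · obtain ⟨m, hm, ham⟩ := mem_Mset_iff.mp (hA.1 ha)
    rwa [hlevel a ha m n hm (by omega) ham hφan (le_max_of_le_right hn)] at ham

/-- Eventually, a pointed `λ`-bi-Lipschitz bijection between pointed `C`-nets of
`M_x` and `M_y` matches the pieces: `φ(M_{x,n} ∩ A) = M_{y,n} ∩ B` for all large `n`. -/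
theorem biLip_eventually_matches (x y : ℕ → ℕ) (hx : SeqOK x) (hy : SeqOK y)
    (C lam : ℝ) (hC : 0 ≤ C) (hlam : 1 ≤ lam)
    (A B : Set (ℝ × ℝ)) (hA : IsNet x C A) (hxA : Pp x 2 ∈ A)
    (hB : IsNet y C B) (hyB : Pp y 2 ∈ B)
    (φ : ℝ × ℝ → ℝ × ℝ) (hφ : IsBiLipOn lam A B φ) (hφ2 : φ (Pp x 2) = Pp y 2) :
    ∃ N, 2 ≤ N ∧ ∀ n, N ≤ n → φ '' (Mpart x n ∩ A) = Mpart y n ∩ B :=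
  biLip_eventually_matches_general x y hx hy C lam hlam A B hA hxA hB φ hφ hφ2
end
end

section
/- Let x = (x_n)_{n≥2} and y = (y_n)_{n≥2} be sequences with x_n, y_n ∈ {1,…,n}. Then sup_{n≥2} |x_n − y_n| < ∞ if and only if there exist C ≥ 0, λ ≥ 1, a C-net A ⊆ M_x with P⁺_{x,2} ∈ A, a C-net B ⊆ M_y with P⁺_{y,2} ∈ B, and a λ-bi-Lipschitz bijection φ : A → B with φ(P⁺_{x,2}) = P⁺_{y,2}. (This realizes the continuous reduction of the relation E_{K_σ} to the quasi-isometry relation.) -/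
noncomputable section

namespace QIAux

open Real Finset

lemma expSum_two : expSum 2 = Real.exp 4 := by
  simp [expSum]
  norm_num

lemma expSum_ge (n : ℕ) (hn : 2 ≤ n) : Real.exp ((n:ℝ)^2) ≤ expSum n := by
  have := Finset.single_le_sum (f := fun i : ℕ => Real.exp ((i : ℝ) ^ 2))
    (fun i _ => (Real.exp_pos _).le) (Finset.mem_Icc.mpr ⟨hn, le_refl n⟩)
  simpa [expSum] using this

lemma expSum_pos (n : ℕ) (hn : 2 ≤ n) : 0 < expSum n :=
  lt_of_lt_of_le (Real.exp_pos _) (expSum_ge n hn)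

lemma expSum_le (n : ℕ) (hn : 2 ≤ n) : expSum n ≤ Real.exp ((n:ℝ)^2 + (n:ℝ)) := by
  have h1 : expSum n ≤ (Finset.Icc 2 n).card • Real.exp ((n:ℝ)^2) := by
    apply Finset.sum_le_card_nsmul
    intro i hi
    have : (i:ℝ) ≤ (n:ℝ) := by exact_mod_cast (Finset.mem_Icc.mp hi).2
    have hi0 : (0:ℝ) ≤ (i:ℝ) := by positivity
    exact Real.exp_le_exp.mpr (by nlinarith)
  have hcard : ((Finset.Icc 2 n).card : ℝ) ≤ Real.exp (n:ℝ) := by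
    have : (Finset.Icc 2 n).card = n - 1 := by
      rw [Nat.card_Icc]; omega
    have h2 : ((Finset.Icc 2 n).card : ℝ) ≤ (n:ℝ) := by
      rw [this]; exact_mod_cast Nat.sub_le n 1
    calc ((Finset.Icc 2 n).card : ℝ) ≤ (n:ℝ) := h2
      _ ≤ Real.exp (n:ℝ) := by
          have := Real.add_one_le_exp (n:ℝ)
          linarith
  calc expSum n ≤ (Finset.Icc 2 n).card • Real.exp ((n:ℝ)^2) := h1
    _ = ((Finset.Icc 2 n).card : ℝ) * Real.exp ((n:ℝ)^2) := by
        rw [nsmul_eq_mul]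
    _ ≤ Real.exp (n:ℝ) * Real.exp ((n:ℝ)^2) := by
        apply mul_le_mul_of_nonneg_right hcard (Real.exp_pos _).le
    _ = Real.exp ((n:ℝ)^2 + (n:ℝ)) := by rw [← Real.exp_add]; ring_nf

lemma expSum_gap (m n : ℕ) (hm : 2 ≤ m) (hmn : m < n) :
    expSum m + Real.exp ((n:ℝ)^2) ≤ expSum n := by
  have hsplit : expSum m + ∑ i ∈ Finset.Ioc m n, Real.exp ((i:ℝ)^2) = expSum n := by
    unfold expSum
    have e1 : Finset.Icc 2 m = Finset.Ioc 1 m := by ext i; simp; omega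
    have e2 : Finset.Icc 2 n = Finset.Ioc 1 n := by ext i; simp; omega
    rw [e1, e2]
    exact Finset.sum_Ioc_consecutive _ (by omega) (le_of_lt hmn)
  have hterm : Real.exp ((n:ℝ)^2) ≤ ∑ i ∈ Finset.Ioc m n, Real.exp ((i:ℝ)^2) :=
    Finset.single_le_sum (f := fun i : ℕ => Real.exp ((i : ℝ) ^ 2))
      (fun i _ => (Real.exp_pos _).le) (Finset.mem_Ioc.mpr ⟨hmn, le_refl n⟩)
  linarith

lemma expSum_inj {m n : ℕ} (hm : 2 ≤ m) (hn : 2 ≤ n) (h : expSum m = expSum n) :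
    m = n := by
  rcases lt_trichotomy m n with hlt | he | hgt
  · have := expSum_gap m n hm hlt
    have := Real.exp_pos ((n:ℝ)^2)
    linarith
  · exact he
  · have := expSum_gap n m hn hgt
    have := Real.exp_pos ((m:ℝ)^2)
    linarith

lemma gap_abs {m n : ℕ} (hm : 2 ≤ m) (hn : 2 ≤ n) (hne : n ≠ m) :
    Real.exp ((n:ℝ)^2) ≤ |expSum n - expSum m| := by
  rcases lt_or_gt_of_ne hne with hlt | hgt
  · have h1 := expSum_gap n m hn hlt
    have h2 : Real.exp ((n:ℝ)^2) ≤ Real.exp ((m:ℝ)^2) := by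
      apply Real.exp_le_exp.mpr
      have : (n:ℝ) ≤ (m:ℝ) := by exact_mod_cast le_of_lt hlt
      nlinarith
    rw [abs_sub_comm, abs_of_nonneg (by linarith [Real.exp_pos ((m:ℝ)^2)])]
    linarith
  · have h1 := expSum_gap m n hm hgt
    rw [abs_of_nonneg (by linarith [Real.exp_pos ((n:ℝ)^2)])]
    linarith

lemma treeDist_same (u v v' : ℝ) : treeDist (u, v) (u, v') = |v - v'| := if_pos rfl

lemma treeDist_ne {u u' : ℝ} (h : u ≠ u') (v v' : ℝ) :
    treeDist (u, v) (u', v') = |v| + |u - u'| + |v'| := if_neg h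

lemma treeDist_self (p : ℝ × ℝ) : treeDist p p = 0 := by
  simp [treeDist]

lemma mem_Mset_iff (x : ℕ → ℕ) (p : ℝ × ℝ) :
    p ∈ Mset x ↔ ∃ n s, 2 ≤ n ∧ ((s:ℝ) = 1 ∨ s = -1) ∧
      p = (expSum n, s * Real.exp (x n)) := by
  simp only [Mset, Set.mem_iUnion, Set.mem_setOf_eq, Mpart, Set.mem_insert_iff,
    Set.mem_singleton_iff]
  constructor
  · rintro ⟨n, hn, h | h⟩
    · exact ⟨n, 1, hn, Or.inl rfl, by simpa [Pp] using h⟩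
    · exact ⟨n, -1, hn, Or.inr rfl, by simpa [Pm] using h⟩
  · rintro ⟨n, s, hn, hs | hs, hp⟩
    · exact ⟨n, hn, Or.inl (by simp [Pp, hp, hs])⟩
    · exact ⟨n, hn, Or.inr (by simp [Pm, hp, hs])⟩

lemma mem_Mpart_iff (x : ℕ → ℕ) (n : ℕ) (p : ℝ × ℝ) :
    p ∈ Mpart x n ↔ p = Pp x n ∨ p = Pm x n := by
  simp [Mpart]

lemma Pp_mem_Mset (x : ℕ → ℕ) {n : ℕ} (hn : 2 ≤ n) : Pp x n ∈ Mset x := by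
  rw [mem_Mset_iff]
  exact ⟨n, 1, hn, Or.inl rfl, by simp [Pp]⟩

lemma Pm_mem_Mset (x : ℕ → ℕ) {n : ℕ} (hn : 2 ≤ n) : Pm x n ∈ Mset x := by
  rw [mem_Mset_iff]
  exact ⟨n, -1, hn, Or.inr rfl, by simp [Pm]⟩

end QIAux

namespace QIAux

open Real

lemma col_fst {x : ℕ → ℕ} {n : ℕ} {p : ℝ × ℝ} (hp : p ∈ Mpart x n) :
    p.1 = expSum n := by
  rcases (mem_Mpart_iff x n p).mp hp with h | h <;> simp [h, Pp, Pm]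

lemma col_snd {x : ℕ → ℕ} {n : ℕ} {p : ℝ × ℝ} (hp : p ∈ Mpart x n) :
    |p.2| = Real.exp (x n) := by
  rcases (mem_Mpart_iff x n p).mp hp with h | h <;>
    simp [h, Pp, Pm, abs_of_pos (Real.exp_pos _)]

/-- distance from basepoint to a point in column `n ≥ 3`. -/
lemma dist_base {x : ℕ → ℕ} {n : ℕ} (hn : 3 ≤ n) {p : ℝ × ℝ} (hp : p ∈ Mpart x n) :
    treeDist (Pp x 2) p = Real.exp (x 2) + (expSum n - expSum 2) + |p.2| := by
  have hne : expSum 2 ≠ expSum n := fun h => by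
    have := expSum_inj (le_refl 2) (by omega) h; omega
  have h2 : expSum 2 + Real.exp ((n:ℝ)^2) ≤ expSum n := expSum_gap 2 n (le_refl 2) (by omega)
  have : treeDist (Pp x 2) p = treeDist (expSum 2, Real.exp (x 2)) (p.1, p.2) := by
    simp [Pp]
  rw [this, col_fst hp, treeDist_ne hne]
  rw [abs_of_pos (Real.exp_pos _), abs_sub_comm,
    abs_of_nonneg (by linarith [Real.exp_pos ((n:ℝ)^2)])]

lemma dist_base_lb {x : ℕ → ℕ} {n : ℕ} (hn : 3 ≤ n) {p : ℝ × ℝ}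
    (hp : p ∈ Mpart x n) :
    Real.exp ((n:ℝ)^2) - Real.exp 4 ≤ treeDist (Pp x 2) p := by
  rw [dist_base hn hp, expSum_two]
  have h1 := expSum_ge n (by omega)
  have h2 := Real.exp_pos (x 2 : ℝ)
  have h3 := abs_nonneg p.2
  linarith

lemma dist_base_lb' {x : ℕ → ℕ} {n : ℕ} (hn : 3 ≤ n) {p : ℝ × ℝ}
    (hp : p ∈ Mpart x n) :
    Real.exp ((n:ℝ)^2) / 2 ≤ treeDist (Pp x 2) p := by
  have := dist_base_lb hn hp
  have h4 : Real.exp (4:ℝ) ≤ Real.exp ((n:ℝ)^2) / 2 := by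
    have hn' : (3:ℝ) ≤ (n:ℝ) := by exact_mod_cast hn
    have : (4:ℝ) + 1 ≤ (n:ℝ)^2 := by nlinarith
    have := Real.exp_le_exp.mpr this
    rw [Real.exp_add] at this
    nlinarith [Real.exp_pos (4:ℝ), Real.exp_one_gt_d9]
  linarith

lemma dist_base_ub {x : ℕ → ℕ} (hx : SeqOK x) {n : ℕ} (hn : 3 ≤ n) {p : ℝ × ℝ}
    (hp : p ∈ Mpart x n) :
    treeDist (Pp x 2) p ≤ Real.exp ((n:ℝ)^2 + (n:ℝ) + 1) := by
  rw [dist_base hn hp, col_snd hp]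
  have hx2 : Real.exp ((x 2 : ℕ):ℝ) ≤ Real.exp (n:ℝ) := by
    apply Real.exp_le_exp.mpr
    have := (hx 2 (le_refl 2)).2
    have : ((x 2 : ℕ):ℝ) ≤ 2 := by exact_mod_cast this
    have hn' : (3:ℝ) ≤ (n:ℝ) := by exact_mod_cast hn
    linarith
  have hxn : Real.exp ((x n : ℕ):ℝ) ≤ Real.exp (n:ℝ) := by
    apply Real.exp_le_exp.mpr
    exact_mod_cast (hx n (by omega)).2
  have hsum := expSum_le n (by omega)
  have key : Real.exp ((n:ℝ)^2 + (n:ℝ)) + 2 * Real.exp (n:ℝ) ≤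
      Real.exp ((n:ℝ)^2 + (n:ℝ) + 1) := by
    rw [Real.exp_add (((n:ℝ)^2 + (n:ℝ))) 1]
    have h2 : 2 * Real.exp ((n:ℝ)) ≤ Real.exp ((n:ℝ)^2 + (n:ℝ)) := by
      have ha : (2:ℝ) ≤ Real.exp 1 := by nlinarith [Real.exp_one_gt_d9]
      calc 2 * Real.exp ((n:ℝ)) ≤ Real.exp 1 * Real.exp ((n:ℝ)) := by
            nlinarith [Real.exp_pos ((n:ℝ))]
        _ = Real.exp (1 + (n:ℝ)) := (Real.exp_add 1 (n:ℝ)).symm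
        _ ≤ Real.exp ((n:ℝ)^2 + (n:ℝ)) := by
            apply Real.exp_le_exp.mpr
            have hn' : (3:ℝ) ≤ (n:ℝ) := by exact_mod_cast hn
            nlinarith
    nlinarith [Real.exp_one_gt_d9, Real.exp_pos ((n:ℝ)^2 + (n:ℝ))]
  have hpos := expSum_pos 2 (le_refl 2)
  linarith

lemma dist_PpPm (x : ℕ → ℕ) (n : ℕ) : treeDist (Pp x n) (Pm x n) = 2 * Real.exp ((x n : ℕ):ℝ) := by
  rw [Pp, Pm, treeDist_same, sub_neg_eq_add, abs_of_pos (by positivity)]; ring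

lemma dist_PmPp (x : ℕ → ℕ) (n : ℕ) : treeDist (Pm x n) (Pp x n) = 2 * Real.exp ((x n : ℕ):ℝ) := by
  rw [Pm, Pp, treeDist_same]
  have h : -Real.exp ((x n : ℕ):ℝ) - Real.exp ((x n : ℕ):ℝ) = -(2 * Real.exp ((x n : ℕ):ℝ)) := by ring
  rw [h, abs_neg, abs_of_pos (by positivity)]

/-- For big columns, the net must contain the two extreme points themselves. -/
lemma net_hits {x : ℕ → ℕ} {C : ℝ} {A : Set (ℝ × ℝ)} (hA : IsNet x C A)
    {n : ℕ} (hn : 2 ≤ n) (hb1 : C + 1 < Real.exp ((n:ℝ)^2))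
    (hb2 : C + 1 < 2 * Real.exp ((x n : ℕ):ℝ)) :
    Pp x n ∈ A ∧ Pm x n ∈ A := by
  have key : ∀ p ∈ Mpart x n, p ∈ Mset x → p ∈ A := by
    intro p hpart hmem
    obtain ⟨a, haA, hd⟩ := hA.2 p hmem 1 one_pos
    obtain ⟨m, hm, hma⟩ : ∃ m, 2 ≤ m ∧ a ∈ Mpart x m := by
      have := hA.1 haA
      rw [mem_Mset_iff] at this
      obtain ⟨m, s, hm, hs, ha⟩ := this
      refine ⟨m, hm, ?_⟩
      rw [mem_Mpart_iff]
      rcases hs with hs | hs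
      · left; simp [Pp, ha, hs]
      · right; simp [Pm, ha, hs]
    by_cases hnm : m = n
    · subst hnm
      rcases (mem_Mpart_iff x m p).mp hpart with hp | hp <;>
        rcases (mem_Mpart_iff x m a).mp hma with ha | ha <;>
          subst hp <;> subst ha
      · exact haA
      · exfalso; rw [dist_PpPm] at hd; linarith
      · exfalso; rw [dist_PmPp] at hd; linarith
      · exact haA
    · exfalso
      have hne : p.1 ≠ a.1 := by
        rw [col_fst hpart, col_fst hma]
        intro h
        exact hnm (expSum_inj hm hn h.symm)
      have : treeDist p a = |p.2| + |p.1 - a.1| + |a.2| := by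
        have : treeDist p a = treeDist (p.1, p.2) (a.1, a.2) := by simp
        rw [this, treeDist_ne hne]
      rw [this, col_fst hpart, col_fst hma] at hd
      have hgap := gap_abs hm hn (fun h => hnm h.symm)
      have := abs_nonneg p.2
      have := abs_nonneg a.2
      linarith
  constructor
  · exact key _ (by rw [mem_Mpart_iff]; left; rfl) (Pp_mem_Mset x hn)
  · exact key _ (by rw [mem_Mpart_iff]; right; rfl) (Pm_mem_Mset x hn)

end QIAux

namespace QIAux

open Real

/-- Column identification: comparable distances to the basepoints force equal columns. -/
lemma col_id {x y : ℕ → ℕ} (hx : SeqOK x) (hy : SeqOK y) {lam : ℝ} (hlam : 1 ≤ lam)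
    {n m : ℕ} (hn : 3 ≤ n) (hm : 2 ≤ m) (hbig : 2 * lam < Real.exp ((n:ℝ) - 1))
    {p q : ℝ × ℝ} (hp : p ∈ Mpart x n) (hq : q ∈ Mpart y m)
    (h1 : lam⁻¹ * treeDist (Pp x 2) p ≤ treeDist (Pp y 2) q)
    (h2 : treeDist (Pp y 2) q ≤ lam * treeDist (Pp x 2) p) : m = n := by
  have hlam0 : (0:ℝ) < lam := by linarith
  have hD1lb := dist_base_lb' hn hp
  have hD1ub := dist_base_ub hx hn hp
  by_contra hne
  -- convert h1 : D1 ≤ lam * D2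
  have h1' : treeDist (Pp x 2) p ≤ lam * treeDist (Pp y 2) q := by
    have := mul_le_mul_of_nonneg_left h1 hlam0.le
    rwa [← mul_assoc, mul_inv_cancel₀ hlam0.ne', one_mul] at this
  rcases lt_trichotomy m n with hlt | he | hgt
  · -- m < n
    rcases Nat.lt_or_ge m 3 with hm2 | hm3
    · -- m = 2 : D2 ≤ exp 4
      have hm2' : m = 2 := by omega
      subst hm2'
      have hD2ub : treeDist (Pp y 2) q ≤ Real.exp 4 := by
        rcases (mem_Mpart_iff y 2 q).mp hq with hq' | hq'
        · subst hq'; rw [treeDist_self]; positivity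
        · subst hq'
          rw [dist_PpPm]
          have : ((y 2 : ℕ):ℝ) ≤ 2 := by exact_mod_cast (hy 2 (le_refl 2)).2
          have h3 : Real.exp ((y 2:ℕ):ℝ) ≤ Real.exp 2 := Real.exp_le_exp.mpr this
          have h4 : 2 * Real.exp (2:ℝ) ≤ Real.exp 4 := by
            have : Real.exp (2:ℝ) * Real.exp (2:ℝ) = Real.exp 4 := by
              rw [← Real.exp_add]; norm_num
            nlinarith [Real.exp_pos (2:ℝ), Real.exp_one_gt_d9,
              Real.add_one_le_exp (1:ℝ), Real.add_one_le_exp (2:ℝ)]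
          linarith
      -- D1 ≤ lam * D2 ≤ lam * exp 4 < exp(n-1)/2 * exp 4 = exp(n+3)/2 ≤ exp(n²)/2 ≤ D1
      have hnr : (3:ℝ) ≤ (n:ℝ) := by exact_mod_cast hn
      have hkey : Real.exp ((n:ℝ) - 1) * Real.exp 4 ≤ Real.exp ((n:ℝ)^2) := by
        rw [← Real.exp_add]
        apply Real.exp_le_exp.mpr
        nlinarith
      have hD2nn : (0:ℝ) ≤ treeDist (Pp y 2) q := by
        have := dist_base_lb' hn hp
        nlinarith [Real.exp_pos ((n:ℝ)^2)]
      nlinarith [Real.exp_pos ((n:ℝ)^2), Real.exp_pos ((n:ℝ) - 1), Real.exp_pos (4:ℝ)]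
    · -- 3 ≤ m < n
      have hD2ub := dist_base_ub hy hm3 hq
      have hmr : (m:ℝ) + 1 ≤ (n:ℝ) := by exact_mod_cast hlt
      have hkey : Real.exp ((n:ℝ) - 1) * Real.exp ((m:ℝ)^2 + (m:ℝ) + 1) ≤
          Real.exp ((n:ℝ)^2) := by
        rw [← Real.exp_add]
        apply Real.exp_le_exp.mpr
        nlinarith [sq_nonneg ((n:ℝ) - (m:ℝ) - 1)]
      nlinarith [Real.exp_pos ((n:ℝ)^2), Real.exp_pos ((n:ℝ) - 1),
        Real.exp_pos ((m:ℝ)^2 + (m:ℝ) + 1)]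
  · exact hne he
  · -- n < m
    have hm3 : 3 ≤ m := by omega
    have hD2lb := dist_base_lb' hm3 hq
    have hmr : (n:ℝ) + 1 ≤ (m:ℝ) := by exact_mod_cast hgt
    have hkey : Real.exp ((n:ℝ) - 1) * Real.exp ((n:ℝ)^2 + (n:ℝ) + 1) ≤
        Real.exp ((m:ℝ)^2) := by
      rw [← Real.exp_add]
      apply Real.exp_le_exp.mpr
      nlinarith
    nlinarith [Real.exp_pos ((m:ℝ)^2), Real.exp_pos ((n:ℝ) - 1),
      Real.exp_pos ((n:ℝ)^2 + (n:ℝ) + 1)]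

end QIAux

namespace QIAux

open Real

lemma Pp_ne_Pm (x : ℕ → ℕ) (n : ℕ) : Pp x n ≠ Pm x n := by
  intro h
  have h2 := congrArg Prod.snd h
  simp only [Pp, Pm] at h2
  nlinarith [Real.exp_pos ((x n : ℕ):ℝ)]

lemma mem_Mset_col {x : ℕ → ℕ} {p : ℝ × ℝ} (hp : p ∈ Mset x) :
    ∃ m, 2 ≤ m ∧ p ∈ Mpart x m := by
  rw [mem_Mset_iff] at hp
  obtain ⟨m, s, hm, hs, hps⟩ := hp
  refine ⟨m, hm, ?_⟩
  rw [mem_Mpart_iff]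
  rcases hs with hs | hs
  · left; simp [Pp, hps, hs]
  · right; simp [Pm, hps, hs]

lemma dist_distinct {x : ℕ → ℕ} {n : ℕ} {p q : ℝ × ℝ} (hp : p ∈ Mpart x n)
    (hq : q ∈ Mpart x n) (hne : p ≠ q) :
    treeDist p q = 2 * Real.exp ((x n : ℕ):ℝ) := by
  rcases (mem_Mpart_iff x n p).mp hp with h | h <;>
    rcases (mem_Mpart_iff x n q).mp hq with h' | h' <;> subst h <;> subst h'
  · exact absurd rfl hne
  · exact dist_PpPm x n
  · exact dist_PmPp x n
  · exact absurd rfl hne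

lemma flip_bilip {lam a b : ℝ} (hlam : 0 < lam) (h1 : lam⁻¹ * a ≤ b) (h2 : b ≤ lam * a) :
    lam⁻¹ * b ≤ a ∧ a ≤ lam * b := by
  constructor
  · have := mul_le_mul_of_nonneg_left h2 (inv_nonneg.mpr hlam.le)
    rwa [← mul_assoc, inv_mul_cancel₀ hlam.ne', one_mul] at this
  · have := mul_le_mul_of_nonneg_left h1 hlam.le
    rwa [← mul_assoc, mul_inv_cancel₀ hlam.ne', one_mul] at this

/-- Main transfer lemma, direct version. -/
lemma transfer {x y : ℕ → ℕ} (hx : SeqOK x) (hy : SeqOK y) {C lam : ℝ}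
    {A B : Set (ℝ × ℝ)} {φ : ℝ × ℝ → ℝ × ℝ} (hlam : 1 ≤ lam)
    (hA : IsNet x C A) (hbA : Pp x 2 ∈ A) (hB : IsNet y C B)
    (hφ : IsBiLipOn lam A B φ) (hbase : φ (Pp x 2) = Pp y 2)
    {n : ℕ} (hn : 3 ≤ n) (hbig : 2 * lam < Real.exp ((n:ℝ) - 1))
    (hb1 : C + 1 < Real.exp ((n:ℝ)^2))
    (hxn : C + 2 ≤ Real.exp ((x n : ℕ):ℝ)) :
    lam⁻¹ * Real.exp ((x n : ℕ):ℝ) ≤ Real.exp ((y n : ℕ):ℝ) ∧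
    Real.exp ((y n : ℕ):ℝ) ≤ lam * Real.exp ((x n : ℕ):ℝ) := by
  have hlam0 : (0:ℝ) < lam := by linarith
  have hn2 : 2 ≤ n := by omega
  obtain ⟨hPp, hPm⟩ := net_hits hA hn2 hb1
    (by nlinarith [Real.exp_pos ((x n : ℕ):ℝ)])
  have himg : ∀ p ∈ A, p ∈ Mpart x n → φ p ∈ Mpart y n := by
    intro p hpA hpcol
    obtain ⟨m, hm, hφcol⟩ := mem_Mset_col (hB.1 (hφ.1.1 hpA))
    have hbl := hφ.2 (Pp x 2) hbA p hpA
    rw [hbase] at hbl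
    have hmn := col_id hx hy hlam hn hm hbig hpcol hφcol hbl.1 hbl.2
    rwa [hmn] at hφcol
  have h1 := himg _ hPp ((mem_Mpart_iff x n _).mpr (Or.inl rfl))
  have h2 := himg _ hPm ((mem_Mpart_iff x n _).mpr (Or.inr rfl))
  have hneq : φ (Pp x n) ≠ φ (Pm x n) := by
    intro h
    exact Pp_ne_Pm x n (hφ.1.2.1 hPp hPm h)
  have hdist : treeDist (φ (Pp x n)) (φ (Pm x n)) = 2 * Real.exp ((y n : ℕ):ℝ) :=
    dist_distinct h1 h2 hneq
  have hbl := hφ.2 (Pp x n) hPp (Pm x n) hPm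
  rw [hdist, dist_PpPm] at hbl
  constructor
  · nlinarith [hbl.1]
  · nlinarith [hbl.2]

/-- Main transfer lemma, inverse version. -/
lemma transfer' {x y : ℕ → ℕ} (hx : SeqOK x) (hy : SeqOK y) {C lam : ℝ}
    {A B : Set (ℝ × ℝ)} {φ : ℝ × ℝ → ℝ × ℝ} (hlam : 1 ≤ lam)
    (hA : IsNet x C A) (hbA : Pp x 2 ∈ A) (hB : IsNet y C B)
    (hφ : IsBiLipOn lam A B φ) (hbase : φ (Pp x 2) = Pp y 2)
    {n : ℕ} (hn : 3 ≤ n) (hbig : 2 * lam < Real.exp ((n:ℝ) - 1))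
    (hb1 : C + 1 < Real.exp ((n:ℝ)^2))
    (hyn : C + 2 ≤ Real.exp ((y n : ℕ):ℝ)) :
    lam⁻¹ * Real.exp ((x n : ℕ):ℝ) ≤ Real.exp ((y n : ℕ):ℝ) ∧
    Real.exp ((y n : ℕ):ℝ) ≤ lam * Real.exp ((x n : ℕ):ℝ) := by
  have hlam0 : (0:ℝ) < lam := by linarith
  have hn2 : 2 ≤ n := by omega
  obtain ⟨hQp, hQm⟩ := net_hits hB hn2 hb1
    (by nlinarith [Real.exp_pos ((y n : ℕ):ℝ)])
  have hpre : ∀ q, q ∈ Mpart y n → q ∈ B → ∃ p ∈ A, φ p = q ∧ p ∈ Mpart x n := by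
    intro q hqcol hqB
    obtain ⟨p, hpA, hφp⟩ := hφ.1.2.2 hqB
    obtain ⟨m, hm, hpcol⟩ := mem_Mset_col (hA.1 hpA)
    have hbl := hφ.2 (Pp x 2) hbA p hpA
    rw [hbase, hφp] at hbl
    obtain ⟨hbl1, hbl2⟩ := flip_bilip hlam0 hbl.1 hbl.2
    have hmn := col_id hy hx hlam hn hm hbig hqcol hpcol hbl1 hbl2
    rw [hmn] at hpcol
    exact ⟨p, hpA, hφp, hpcol⟩
  obtain ⟨p1, hp1A, hφ1, hc1⟩ := hpre (Pp y n) ((mem_Mpart_iff y n _).mpr (Or.inl rfl)) hQp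
  obtain ⟨p2, hp2A, hφ2, hc2⟩ := hpre (Pm y n) ((mem_Mpart_iff y n _).mpr (Or.inr rfl)) hQm
  have hneq : p1 ≠ p2 := by
    intro h; rw [h, hφ2] at hφ1; exact Pp_ne_Pm y n hφ1.symm
  have hdist : treeDist p1 p2 = 2 * Real.exp ((x n : ℕ):ℝ) := dist_distinct hc1 hc2 hneq
  have hbl := hφ.2 p1 hp1A p2 hp2A
  rw [hφ1, hφ2, hdist, dist_PpPm] at hbl
  constructor
  · nlinarith [hbl.1]
  · nlinarith [hbl.2]

end QIAux

namespace QIAux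

open Real

lemma log_bound {lam a b : ℝ} (hlam : 1 ≤ lam)
    (l : lam⁻¹ * Real.exp a ≤ Real.exp b) (r : Real.exp b ≤ lam * Real.exp a) :
    |a - b| ≤ Real.log lam := by
  have hlam0 : (0:ℝ) < lam := by linarith
  have hr : b ≤ Real.log lam + a := by
    have : Real.exp b ≤ Real.exp (Real.log lam + a) := by
      rw [Real.exp_add, Real.exp_log hlam0]; exact r
    exact Real.exp_le_exp.mp this
  have hl : a ≤ Real.log lam + b := by
    have h2 : Real.exp a ≤ lam * Real.exp b := (flip_bilip hlam0 l r).2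
    have : Real.exp a ≤ Real.exp (Real.log lam + b) := by
      rw [Real.exp_add, Real.exp_log hlam0]; exact h2
    exact Real.exp_le_exp.mp this
  rw [abs_sub_le_iff]
  constructor <;> linarith

lemma backward {x y : ℕ → ℕ} (hx : SeqOK x) (hy : SeqOK y) {C lam : ℝ}
    {A B : Set (ℝ × ℝ)} {φ : ℝ × ℝ → ℝ × ℝ} (hC : 0 ≤ C) (hlam : 1 ≤ lam)
    (hA : IsNet x C A) (hbA : Pp x 2 ∈ A) (hB : IsNet y C B)
    (hφ : IsBiLipOn lam A B φ) (hbase : φ (Pp x 2) = Pp y 2) :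
    ∃ D : ℝ, ∀ n, 2 ≤ n → |(x n : ℝ) - (y n : ℝ)| ≤ D := by
  have hlam0 : (0:ℝ) < lam := by linarith
  have hloglam : 0 ≤ Real.log lam := Real.log_nonneg hlam
  have hlogC : 0 ≤ Real.log (C + 2) := Real.log_nonneg (by linarith)
  obtain ⟨N₀, hN₀⟩ := exists_nat_gt (Real.log (2 * lam) + Real.log (C + 2) + 2)
  refine ⟨((N₀ + 3 : ℕ) : ℝ) + Real.log lam + Real.log (C + 2), ?_⟩
  intro n hn2
  have hNnn : (0:ℝ) ≤ ((N₀ + 3 : ℕ) : ℝ) := by positivity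
  by_cases hcase : n < N₀ + 3
  · have hxn := hx n hn2
    have hyn := hy n hn2
    have h1 : (1:ℝ) ≤ (x n : ℝ) := by exact_mod_cast hxn.1
    have h2 : (x n : ℝ) ≤ (n : ℝ) := by exact_mod_cast hxn.2
    have h3 : (1:ℝ) ≤ (y n : ℝ) := by exact_mod_cast hyn.1
    have h4 : (y n : ℝ) ≤ (n : ℝ) := by exact_mod_cast hyn.2
    have h5 : (n : ℝ) ≤ ((N₀ + 3 : ℕ) : ℝ) := by exact_mod_cast le_of_lt hcase
    rw [abs_sub_le_iff]
    constructor <;> linarith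
  · push_neg at hcase
    have hn3 : 3 ≤ n := by omega
    have hnr : ((N₀ + 3 : ℕ) : ℝ) ≤ (n : ℝ) := by exact_mod_cast hcase
    have hNr : ((N₀ + 3 : ℕ) : ℝ) = (N₀ : ℝ) + 3 := by push_cast; ring
    have hbig : 2 * lam < Real.exp ((n:ℝ) - 1) := by
      have hpos : (0:ℝ) < 2 * lam := by linarith
      calc 2 * lam = Real.exp (Real.log (2 * lam)) := (Real.exp_log hpos).symm
        _ < Real.exp ((n:ℝ) - 1) := by
            apply Real.exp_lt_exp.mpr
            rw [hNr] at hnr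
            linarith
    have hb1 : C + 1 < Real.exp ((n:ℝ)^2) := by
      have hpos : (0:ℝ) < C + 2 := by linarith
      have hnr1 : (1:ℝ) ≤ (n:ℝ) := by
        have : (1:ℕ) ≤ n := by omega
        exact_mod_cast this
      have hsq : (n:ℝ) ≤ (n:ℝ)^2 := by nlinarith
      have : C + 2 < Real.exp ((n:ℝ)^2) := by
        calc C + 2 = Real.exp (Real.log (C + 2)) := (Real.exp_log hpos).symm
          _ < Real.exp ((n:ℝ)^2) := by
              apply Real.exp_lt_exp.mpr
              have h2lam : 0 ≤ Real.log (2 * lam) := Real.log_nonneg (by linarith)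
              rw [hNr] at hnr
              linarith
      linarith
    by_cases hbx : C + 2 ≤ Real.exp ((x n : ℕ):ℝ)
    · obtain ⟨l, r⟩ := transfer hx hy hlam hA hbA hB hφ hbase hn3 hbig hb1 hbx
      have := log_bound hlam l r
      calc |(x n : ℝ) - (y n : ℝ)| ≤ Real.log lam := this
        _ ≤ ((N₀ + 3 : ℕ) : ℝ) + Real.log lam + Real.log (C + 2) := by linarith
    · by_cases hby : C + 2 ≤ Real.exp ((y n : ℕ):ℝ)
      · obtain ⟨l, r⟩ := transfer' hx hy hlam hA hbA hB hφ hbase hn3 hbig hb1 hby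
        have := log_bound hlam l r
        calc |(x n : ℝ) - (y n : ℝ)| ≤ Real.log lam := this
          _ ≤ ((N₀ + 3 : ℕ) : ℝ) + Real.log lam + Real.log (C + 2) := by linarith
      · push_neg at hbx hby
        have hpos : (0:ℝ) < C + 2 := by linarith
        have hxv : ((x n : ℕ):ℝ) < Real.log (C + 2) := by
          have : Real.exp ((x n : ℕ):ℝ) < Real.exp (Real.log (C + 2)) := by
            rw [Real.exp_log hpos]; exact hbx
          exact Real.exp_lt_exp.mp this
        have hyv : ((y n : ℕ):ℝ) < Real.log (C + 2) := by
          have : Real.exp ((y n : ℕ):ℝ) < Real.exp (Real.log (C + 2)) := by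
            rw [Real.exp_log hpos]; exact hby
          exact Real.exp_lt_exp.mp this
        have h1 : (1:ℝ) ≤ (x n : ℝ) := by exact_mod_cast (hx n hn2).1
        have h3 : (1:ℝ) ≤ (y n : ℝ) := by exact_mod_cast (hy n hn2).1
        rw [abs_sub_le_iff]
        constructor <;> linarith

end QIAux

namespace QIAux

open Real

open scoped Classical in
/-- The natural map `M_x → M_y`. -/
def phi (y : ℕ → ℕ) (p : ℝ × ℝ) : ℝ × ℝ :=
  if h : ∃ n, 2 ≤ n ∧ expSum n = p.1 then
    (p.1, (if 0 ≤ p.2 then 1 else -1) * Real.exp ((y h.choose : ℕ):ℝ))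
  else p

lemma phi_rep (x y : ℕ → ℕ) {n : ℕ} {s : ℝ} (hn : 2 ≤ n) (hs : s = 1 ∨ s = -1) :
    phi y (expSum n, s * Real.exp ((x n : ℕ):ℝ)) =
      (expSum n, s * Real.exp ((y n : ℕ):ℝ)) := by
  have hex : ∃ m, 2 ≤ m ∧ expSum m = (expSum n, s * Real.exp ((x n : ℕ):ℝ)).1 :=
    ⟨n, hn, rfl⟩
  unfold phi
  rw [dif_pos hex]
  have hc := hex.choose_spec
  have hce : hex.choose = n := expSum_inj hc.1 hn hc.2
  rw [hce]
  have hsign : (if 0 ≤ (expSum n, s * Real.exp ((x n : ℕ):ℝ)).2 then (1:ℝ) else -1) = s := by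
    rcases hs with hs | hs <;> subst hs
    · rw [if_pos (by simp [(Real.exp_pos _).le])]
    · rw [if_neg]
      simp only [neg_one_mul]
      push_neg
      simp [Real.exp_pos]
  rw [hsign]

lemma dist_formula (x : ℕ → ℕ) {n m : ℕ} (hn : 2 ≤ n) (hm : 2 ≤ m) {s t : ℝ}
    (hs : s = 1 ∨ s = -1) (ht : t = 1 ∨ t = -1) :
    treeDist (expSum n, s * Real.exp ((x n : ℕ):ℝ))
      (expSum m, t * Real.exp ((x m : ℕ):ℝ)) =
    if n = m then (if s = t then 0 else 2 * Real.exp ((x n : ℕ):ℝ))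
    else Real.exp ((x n : ℕ):ℝ) + |expSum n - expSum m| + Real.exp ((x m : ℕ):ℝ) := by
  by_cases hnm : n = m
  · subst hnm
    rw [if_pos rfl, treeDist_same]
    by_cases hst : s = t
    · subst hst; rw [if_pos rfl]; simp
    · rw [if_neg hst]
      rcases hs with hs | hs <;> rcases ht with ht | ht <;> subst hs <;> subst ht
      · exact absurd rfl hst
      · rw [one_mul, neg_one_mul, sub_neg_eq_add, abs_of_pos (by positivity)]; ring
      · rw [one_mul, neg_one_mul]
        have h : -Real.exp ((x n : ℕ):ℝ) - Real.exp ((x n : ℕ):ℝ) =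
            -(2 * Real.exp ((x n : ℕ):ℝ)) := by ring
        rw [h, abs_neg, abs_of_pos (by positivity)]
      · exact absurd rfl hst
  · rw [if_neg hnm, treeDist_ne (fun h => hnm (expSum_inj hn hm h))]
    have h1 : |s * Real.exp ((x n : ℕ):ℝ)| = Real.exp ((x n : ℕ):ℝ) := by
      rcases hs with hs | hs <;> subst hs <;>
        simp [abs_of_pos (Real.exp_pos _), abs_of_nonpos]
    have h2 : |t * Real.exp ((x m : ℕ):ℝ)| = Real.exp ((x m : ℕ):ℝ) := by
      rcases ht with ht | ht <;> subst ht <;>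
        simp [abs_of_pos (Real.exp_pos _), abs_of_nonpos]
    rw [h1, h2]

lemma dist_comp {x y : ℕ → ℕ} {D : ℝ} (hD0 : 0 ≤ D)
    (hD : ∀ k, 2 ≤ k → ((y k : ℕ):ℝ) ≤ D + ((x k : ℕ):ℝ))
    {n m : ℕ} (hn : 2 ≤ n) (hm : 2 ≤ m) {s t : ℝ}
    (hs : s = 1 ∨ s = -1) (ht : t = 1 ∨ t = -1) :
    treeDist (expSum n, s * Real.exp ((y n : ℕ):ℝ))
      (expSum m, t * Real.exp ((y m : ℕ):ℝ)) ≤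
    Real.exp D * treeDist (expSum n, s * Real.exp ((x n : ℕ):ℝ))
      (expSum m, t * Real.exp ((x m : ℕ):ℝ)) := by
  rw [dist_formula y hn hm hs ht, dist_formula x hn hm hs ht]
  have hone : (1:ℝ) ≤ Real.exp D := by
    rw [← Real.exp_zero]; exact Real.exp_le_exp.mpr hD0
  have hcn : Real.exp ((y n : ℕ):ℝ) ≤ Real.exp D * Real.exp ((x n : ℕ):ℝ) := by
    rw [← Real.exp_add]; exact Real.exp_le_exp.mpr (hD n hn)
  have hcm : Real.exp ((y m : ℕ):ℝ) ≤ Real.exp D * Real.exp ((x m : ℕ):ℝ) := by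
    rw [← Real.exp_add]; exact Real.exp_le_exp.mpr (hD m hm)
  by_cases hnm : n = m
  · rw [if_pos hnm, if_pos hnm]
    by_cases hst : s = t
    · rw [if_pos hst, if_pos hst]; simp
    · rw [if_neg hst, if_neg hst]; linarith
  · rw [if_neg hnm, if_neg hnm]
    have hg : 0 ≤ |expSum n - expSum m| := abs_nonneg _
    nlinarith

lemma inv_le_of_le {lam a b : ℝ} (hlam : 0 < lam) (h : b ≤ lam * a) : lam⁻¹ * b ≤ a := by
  have := mul_le_mul_of_nonneg_left h (inv_nonneg.mpr hlam.le)
  rwa [← mul_assoc, inv_mul_cancel₀ hlam.ne', one_mul] at this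

end QIAux


namespace QIAux

open Real

lemma forward {x y : ℕ → ℕ} (hx : SeqOK x) (hy : SeqOK y) {D : ℝ}
    (hD : ∀ n, 2 ≤ n → |(x n : ℝ) - (y n : ℝ)| ≤ D) :
    ∃ (C lam : ℝ) (A B : Set (ℝ × ℝ)) (φ : ℝ × ℝ → ℝ × ℝ),
      0 ≤ C ∧ 1 ≤ lam ∧ IsNet x C A ∧ Pp x 2 ∈ A ∧ IsNet y C B ∧ Pp y 2 ∈ B ∧
      IsBiLipOn lam A B φ ∧ φ (Pp x 2) = Pp y 2 := by
  have hD0 : 0 ≤ D := le_trans (abs_nonneg _) (hD 2 (le_refl 2))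
  have hone : (1:ℝ) ≤ Real.exp D := by
    rw [← Real.exp_zero]; exact Real.exp_le_exp.mpr hD0
  have hyx : ∀ k, 2 ≤ k → ((y k : ℕ):ℝ) ≤ D + ((x k : ℕ):ℝ) := by
    intro k hk
    have := hD k hk
    rw [abs_sub_le_iff] at this
    linarith [this.2]
  have hxy : ∀ k, 2 ≤ k → ((x k : ℕ):ℝ) ≤ D + ((y k : ℕ):ℝ) := by
    intro k hk
    have := hD k hk
    rw [abs_sub_le_iff] at this
    linarith [this.1]
  refine ⟨0, Real.exp D, Mset x, Mset y, phi y, le_refl 0, hone,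
    ⟨subset_refl _, fun p hp ε hε => ⟨p, hp, by rw [treeDist_self]; linarith⟩⟩,
    Pp_mem_Mset x (le_refl 2),
    ⟨subset_refl _, fun p hp ε hε => ⟨p, hp, by rw [treeDist_self]; linarith⟩⟩,
    Pp_mem_Mset y (le_refl 2), ⟨⟨?_, ?_, ?_⟩, ?_⟩, ?_⟩
  · intro p hp
    obtain ⟨n, s, hn, hs, rfl⟩ := (mem_Mset_iff x p).mp hp
    rw [phi_rep x y hn hs]
    exact (mem_Mset_iff y _).mpr ⟨n, s, hn, hs, rfl⟩
  · intro p hp q hq h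
    obtain ⟨n, s, hn, hs, rfl⟩ := (mem_Mset_iff x p).mp hp
    obtain ⟨m, t, hm, ht, rfl⟩ := (mem_Mset_iff x q).mp hq
    rw [phi_rep x y hn hs, phi_rep x y hm ht] at h
    have h1 : expSum n = expSum m := congrArg Prod.fst h
    have hnm : n = m := expSum_inj hn hm h1
    subst hnm
    have h2 : s * Real.exp ((y n : ℕ):ℝ) = t * Real.exp ((y n : ℕ):ℝ) :=
      congrArg Prod.snd h
    have hst : s = t := mul_right_cancel₀ (Real.exp_ne_zero _) h2
    rw [hst]
  · intro q hq
    obtain ⟨n, s, hn, hs, rfl⟩ := (mem_Mset_iff y q).mp hq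
    exact ⟨(expSum n, s * Real.exp ((x n : ℕ):ℝ)),
      (mem_Mset_iff x _).mpr ⟨n, s, hn, hs, rfl⟩, phi_rep x y hn hs⟩
  · intro p hp q hq
    obtain ⟨n, s, hn, hs, rfl⟩ := (mem_Mset_iff x p).mp hp
    obtain ⟨m, t, hm, ht, rfl⟩ := (mem_Mset_iff x q).mp hq
    rw [phi_rep x y hn hs, phi_rep x y hm ht]
    exact ⟨inv_le_of_le (Real.exp_pos D) (dist_comp hD0 hxy hn hm hs ht),
      dist_comp hD0 hyx hn hm hs ht⟩
  · have h : Pp x 2 = (expSum 2, (1:ℝ) * Real.exp ((x 2 : ℕ):ℝ)) := by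
      rw [Pp, one_mul]
    rw [h, phi_rep x y (le_refl 2) (Or.inl rfl), one_mul, Pp]

end QIAux


/-- `sup_{n≥2} |x_n − y_n| < ∞` iff there is a pointed bi-Lipschitz bijection between
pointed nets of `M_x` and `M_y`; this realizes the continuous reduction of `E_{K_σ}`
to the quasi-isometry relation. -/
theorem EKsigma_iff_quasiIsometric (x y : ℕ → ℕ) (hx : SeqOK x) (hy : SeqOK y) :
    (∃ D : ℝ, ∀ n, 2 ≤ n → |(x n : ℝ) - (y n : ℝ)| ≤ D) ↔
    (∃ (C lam : ℝ) (A B : Set (ℝ × ℝ)) (φ : ℝ × ℝ → ℝ × ℝ),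
      0 ≤ C ∧ 1 ≤ lam ∧ IsNet x C A ∧ Pp x 2 ∈ A ∧ IsNet y C B ∧ Pp y 2 ∈ B ∧
      IsBiLipOn lam A B φ ∧ φ (Pp x 2) = Pp y 2) := by
  constructor
  · rintro ⟨D, hD⟩
    exact QIAux.forward hx hy hD
  · rintro ⟨C, lam, A, B, φ, hC, hlam, hA, hbA, hB, hbB, hφ, hbase⟩
    exact QIAux.backward hx hy hC hlam hA hbA hB hφ hbase
end
end
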